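/- Let ρ̃₀ and ρ₀ be smooth strictly positive probability densities on ℝⁿ with D(ρ̃₀‖ρ₀) finite. Among all quadruples (ρ̃, ρ, ṽ, v) on [0,1] × ℝⁿ with ρ̃, ρ smooth strictly positive probability densities and ṽ, v smooth, satisfying the continuity equations ∂ρ̃/∂t + ∇·(ṽρ̃) = 0, ∂ρ/∂t + ∇·(vρ) = 0, the initial conditions ρ̃(·,0) = ρ̃₀, ρ(·,0) = ρ₀, and the regularity/vanishing-boundary hypotheses making the product-space entropy-derivative formula valid, every quadruple satisfies J(ρ̃,ρ,ṽ,v) ≥ D(ρ̃₀‖ρ₀), and if (ρ̃*, ρ*, ṽ*, v*) additionally satisfies the gradient-flow relations ṽ* = −∇log(ρ̃*/ρ*) and v* = ∇(ρ̃*/ρ*), then J(ρ̃*,ρ*,ṽ*,v*) = D(ρ̃₀‖ρ₀). Hence the gradient flow of the relative entropy on the product Wasserstein space solves the two-velocity control problem. -/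

import Mathlib

open MeasureTheory Real RealInnerProductSpace intervalIntegral

/-- Divergence of a vector field on `ℝⁿ`: `(∇·w)(x) = ∑ᵢ ∂wⁱ/∂xⁱ (x)`. -/
noncomputable def vdiv {n : ℕ} (w : EuclideanSpace ℝ (Fin n) → EuclideanSpace ℝ (Fin n))
    (x : EuclideanSpace ℝ (Fin n)) : ℝ :=
  ∑ i, fderiv ℝ w x (EuclideanSpace.single i 1) i

lemma inner_gradient_apply {n : ℕ} (f : EuclideanSpace ℝ (Fin n) → ℝ)
    (x u : EuclideanSpace ℝ (Fin n)) :
    ⟪gradient f x, u⟫ = fderiv ℝ f x u := by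
  rw [gradient]; exact InnerProductSpace.toDual_symm_apply

lemma gradient_apply_coord {n : ℕ} (f : EuclideanSpace ℝ (Fin n) → ℝ)
    (x : EuclideanSpace ℝ (Fin n)) (i : Fin n) :
    gradient f x i = fderiv ℝ f x (EuclideanSpace.single i 1) := by
  have h := inner_gradient_apply f x (EuclideanSpace.single i 1)
  rw [← h, EuclideanSpace.inner_single_right]; simp

lemma inner_gradient_sum {n : ℕ} (f : EuclideanSpace ℝ (Fin n) → ℝ)
    (x w : EuclideanSpace ℝ (Fin n)) :
    ⟪gradient f x, w⟫ = ∑ i, fderiv ℝ f x (EuclideanSpace.single i 1) * w i := by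
  rw [PiLp.inner_apply]
  refine Finset.sum_congr rfl fun i _ => ?_
  rw [gradient_apply_coord]
  simp [RCLike.inner_apply, mul_comm]

lemma vdiv_smul {n : ℕ} {f : EuclideanSpace ℝ (Fin n) → ℝ}
    {w : EuclideanSpace ℝ (Fin n) → EuclideanSpace ℝ (Fin n)}
    {x : EuclideanSpace ℝ (Fin n)}
    (hf : DifferentiableAt ℝ f x) (hw : DifferentiableAt ℝ w x) :
    vdiv (fun y => f y • w y) x = ⟪gradient f x, w x⟫ + f x * vdiv w x := by
  simp only [vdiv, fderiv_fun_smul hf hw, ContinuousLinearMap.add_apply,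
    ContinuousLinearMap.coe_smul', Pi.smul_apply, ContinuousLinearMap.smulRight_apply,
    PiLp.add_apply, PiLp.smul_apply, smul_eq_mul]
  rw [Finset.sum_add_distrib, Finset.mul_sum, inner_gradient_sum]
  ring

lemma gradient_const_add {n : ℕ} (f : EuclideanSpace ℝ (Fin n) → ℝ)
    (x : EuclideanSpace ℝ (Fin n)) :
    gradient (fun y => (1:ℝ) + f y) x = gradient f x := by
  simp only [gradient, fderiv_const_add]

set_option maxHeartbeats 2000000 in
/-- Let `ρt₀, ρ₀` be smooth strictly positive probability densities with
`D(ρt₀‖ρ₀)` finite.  Every admissible quadruple `(ρt, ρ, vt, v)` — smooth strictly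
positive probability density flows with smooth velocities satisfying the two continuity
equations, the initial conditions, and the regularity/vanishing-boundary hypotheses making
the product-space entropy-derivative formula valid — satisfies `J(ρt,ρ,vt,v) ≥ D(ρt₀‖ρ₀)`,
where `J = (1/2)∫₀¹∫[‖vt‖²ρt + ‖v‖²ρ + ‖∇log(ρt/ρ)‖²ρt + ‖∇(ρt/ρ)‖²ρ] dx dt + D(ρt₁‖ρ₁)`;
and if additionally `vt = -∇log(ρt/ρ)` and `v = ∇(ρt/ρ)` (the gradient-flow relations),
then `J = D(ρt₀‖ρ₀)`.  Hence the gradient flow of the relative entropy on the product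
Wasserstein space solves the two-velocity control problem. -/
theorem product_wasserstein_gradient_flow_optimal {n : ℕ}
    (ρt₀ ρ₀ : EuclideanSpace ℝ (Fin n) → ℝ)
    (hρt₀s : ContDiff ℝ (⊤ : ℕ∞) ρt₀) (hρ₀s : ContDiff ℝ (⊤ : ℕ∞) ρ₀)
    (hρt₀pos : ∀ x, 0 < ρt₀ x) (hρ₀pos : ∀ x, 0 < ρ₀ x)
    (hρt₀1 : ∫ x, ρt₀ x = 1) (hρ₀1 : ∫ x, ρ₀ x = 1)
    (hD0 : Integrable (fun x => ρt₀ x * Real.log (ρt₀ x / ρ₀ x)))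
    (ρt ρ : ℝ → EuclideanSpace ℝ (Fin n) → ℝ)
    (hρts : ContDiff ℝ (⊤ : ℕ∞) (fun p : ℝ × EuclideanSpace ℝ (Fin n) => ρt p.1 p.2))
    (hρs : ContDiff ℝ (⊤ : ℕ∞) (fun p : ℝ × EuclideanSpace ℝ (Fin n) => ρ p.1 p.2))
    (hρtpos : ∀ t x, 0 < ρt t x) (hρpos : ∀ t x, 0 < ρ t x)
    (hρt1 : ∀ t, ∫ x, ρt t x = 1) (hρ1 : ∀ t, ∫ x, ρ t x = 1)
    (hinit₁ : ρt 0 = ρt₀) (hinit₂ : ρ 0 = ρ₀)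
    (vt v : ℝ → EuclideanSpace ℝ (Fin n) → EuclideanSpace ℝ (Fin n))
    (hvts : ContDiff ℝ (⊤ : ℕ∞) (fun p : ℝ × EuclideanSpace ℝ (Fin n) => vt p.1 p.2))
    (hvs : ContDiff ℝ (⊤ : ℕ∞) (fun p : ℝ × EuclideanSpace ℝ (Fin n) => v p.1 p.2))
    (hcet : ∀ t ∈ Set.Icc (0 : ℝ) 1, ∀ x,
      deriv (fun s => ρt s x) t + vdiv (fun y => ρt t y • vt t y) x = 0)
    (hce : ∀ t ∈ Set.Icc (0 : ℝ) 1, ∀ x,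
      deriv (fun s => ρ s x) t + vdiv (fun y => ρ t y • v t y) x = 0)
    (hDUI : ∀ t ∈ Set.Icc (0 : ℝ) 1,
      HasDerivAt (fun s => ∫ x, ρt s x * Real.log (ρt s x / ρ s x))
        (∫ x, (deriv (fun s => ρt s x) t * (1 + Real.log (ρt t x / ρ t x))
          - deriv (fun s => ρ s x) t * (ρt t x / ρ t x))) t)
    (hbdry₁ : ∀ t ∈ Set.Icc (0 : ℝ) 1,
      (Integrable (fun x =>
          vdiv (fun y => (1 + Real.log (ρt t y / ρ t y)) • (ρt t y • vt t y)) x))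
        ∧ ∫ x, vdiv (fun y => (1 + Real.log (ρt t y / ρ t y)) • (ρt t y • vt t y)) x = 0)
    (hbdry₂ : ∀ t ∈ Set.Icc (0 : ℝ) 1,
      (Integrable (fun x => vdiv (fun y => (ρt t y / ρ t y) • (ρ t y • v t y)) x))
        ∧ ∫ x, vdiv (fun y => (ρt t y / ρ t y) • (ρ t y • v t y)) x = 0)
    (hfin₁ : ∀ t ∈ Set.Icc (0 : ℝ) 1,
      Integrable (fun x => ‖vt t x‖ ^ 2 * ρt t x)
        ∧ Integrable (fun x => ‖v t x‖ ^ 2 * ρ t x)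
        ∧ Integrable (fun x =>
            ‖gradient (fun y => Real.log (ρt t y / ρ t y)) x‖ ^ 2 * ρt t x)
        ∧ Integrable (fun x => ‖gradient (fun y => ρt t y / ρ t y) x‖ ^ 2 * ρ t x))
    (hfin₂ : IntervalIntegrable (fun t => ∫ x,
        (‖vt t x‖ ^ 2 * ρt t x + ‖v t x‖ ^ 2 * ρ t x
          + ‖gradient (fun y => Real.log (ρt t y / ρ t y)) x‖ ^ 2 * ρt t x
          + ‖gradient (fun y => ρt t y / ρ t y) x‖ ^ 2 * ρ t x))
      MeasureTheory.volume 0 1) :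
    (1 / 2) * (∫ t in (0 : ℝ)..1, ∫ x,
          (‖vt t x‖ ^ 2 * ρt t x + ‖v t x‖ ^ 2 * ρ t x
            + ‖gradient (fun y => Real.log (ρt t y / ρ t y)) x‖ ^ 2 * ρt t x
            + ‖gradient (fun y => ρt t y / ρ t y) x‖ ^ 2 * ρ t x))
        + (∫ x, ρt 1 x * Real.log (ρt 1 x / ρ 1 x))
      ≥ ∫ x, ρt₀ x * Real.log (ρt₀ x / ρ₀ x)
    ∧ ((∀ t ∈ Set.Icc (0 : ℝ) 1, ∀ x,
          vt t x = -(gradient (fun y => Real.log (ρt t y / ρ t y)) x)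
            ∧ v t x = gradient (fun y => ρt t y / ρ t y) x) →
        (1 / 2) * (∫ t in (0 : ℝ)..1, ∫ x,
            (‖vt t x‖ ^ 2 * ρt t x + ‖v t x‖ ^ 2 * ρ t x
              + ‖gradient (fun y => Real.log (ρt t y / ρ t y)) x‖ ^ 2 * ρt t x
              + ‖gradient (fun y => ρt t y / ρ t y) x‖ ^ 2 * ρ t x))
          + (∫ x, ρt 1 x * Real.log (ρt 1 x / ρ 1 x))
          = ∫ x, ρt₀ x * Real.log (ρt₀ x / ρ₀ x)) := by
  classical
  -- smoothness in space at each fixed time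
  have hcomp : ∀ t : ℝ, ContDiff ℝ (⊤ : ℕ∞) (fun y : EuclideanSpace ℝ (Fin n) => (t, y)) :=
    fun t => contDiff_const.prodMk contDiff_id
  have hρtx : ∀ t, ContDiff ℝ (⊤ : ℕ∞) (fun y => ρt t y) := fun t => hρts.comp (hcomp t)
  have hρx : ∀ t, ContDiff ℝ (⊤ : ℕ∞) (fun y => ρ t y) := fun t => hρs.comp (hcomp t)
  have hvtx : ∀ t, ContDiff ℝ (⊤ : ℕ∞) (fun y => vt t y) := fun t => hvts.comp (hcomp t)
  have hvx : ∀ t, ContDiff ℝ (⊤ : ℕ∞) (fun y => v t y) := fun t => hvs.comp (hcomp t)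
  have hrx : ∀ t, ContDiff ℝ (⊤ : ℕ∞) (fun y => ρt t y / ρ t y) :=
    fun t => (hρtx t).div (hρx t) fun y => (hρpos t y).ne'
  have hLx : ∀ t, ContDiff ℝ (⊤ : ℕ∞) (fun y => Real.log (ρt t y / ρ t y)) :=
    fun t => (hrx t).log fun y => (div_pos (hρtpos t y) (hρpos t y)).ne'
  -- continuity of the gradients
  have hglogc : ∀ t, Continuous (fun x => gradient (fun y => Real.log (ρt t y / ρ t y)) x) := by
    intro t
    exact (InnerProductSpace.toDual ℝ (EuclideanSpace ℝ (Fin n))).symm.continuous.comp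
      ((hLx t).continuous_fderiv (by simp))
  have hgrc : ∀ t, Continuous (fun x => gradient (fun y => ρt t y / ρ t y) x) := by
    intro t
    exact (InnerProductSpace.toDual ℝ (EuclideanSpace ℝ (Fin n))).symm.continuous.comp
      ((hrx t).continuous_fderiv (by simp))
  -- abbreviations
  set D : ℝ → ℝ := fun s => ∫ x, ρt s x * Real.log (ρt s x / ρ s x) with hDdef
  set Fi : ℝ → EuclideanSpace ℝ (Fin n) → ℝ := fun t x =>
    ‖vt t x‖ ^ 2 * ρt t x + ‖v t x‖ ^ 2 * ρ t x
      + ‖gradient (fun y => Real.log (ρt t y / ρ t y)) x‖ ^ 2 * ρt t x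
      + ‖gradient (fun y => ρt t y / ρ t y) x‖ ^ 2 * ρ t x with hFidef
  set h : ℝ → EuclideanSpace ℝ (Fin n) → ℝ := fun t x =>
    ρt t x * ⟪gradient (fun y => Real.log (ρt t y / ρ t y)) x, vt t x⟫
      - ρ t x * ⟪gradient (fun y => ρt t y / ρ t y) x, v t x⟫ with hhdef
  have hFint : ∀ t ∈ Set.Icc (0 : ℝ) 1, Integrable (Fi t) := by
    intro t ht
    obtain ⟨h1, h2, h3, h4⟩ := hfin₁ t ht
    exact ((h1.add h2).add h3).add h4
  -- pointwise bound
  have hbound : ∀ t x, |h t x| ≤ (1 / 2) * Fi t x := by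
    intro t x
    have h1 := abs_real_inner_le_norm
      (gradient (fun y => Real.log (ρt t y / ρ t y)) x) (vt t x)
    have h2 := abs_real_inner_le_norm (gradient (fun y => ρt t y / ρ t y) x) (v t x)
    have h3 := sq_nonneg (‖gradient (fun y => Real.log (ρt t y / ρ t y)) x‖ - ‖vt t x‖)
    have h4 := sq_nonneg (‖gradient (fun y => ρt t y / ρ t y) x‖ - ‖v t x‖)
    have p1 := (hρtpos t x).le
    have p2 := (hρpos t x).le
    rw [abs_le] at h1 h2
    simp only [hhdef, hFidef]
    rw [abs_le]
    constructor <;> nlinarith [h1.1, h1.2, h2.1, h2.2,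
      mul_le_mul_of_nonneg_left h1.2 p1, mul_le_mul_of_nonneg_left h2.2 p2,
      mul_le_mul_of_nonneg_left h1.1 p1, mul_le_mul_of_nonneg_left h2.1 p2,
      mul_nonneg p1 (sq_nonneg (‖gradient (fun y => Real.log (ρt t y / ρ t y)) x‖ - ‖vt t x‖)),
      mul_nonneg p2 (sq_nonneg (‖gradient (fun y => ρt t y / ρ t y) x‖ - ‖v t x‖))]
  have hhcont : ∀ t, Continuous (h t) := by
    intro t
    exact (((hρtx t).continuous.mul ((hglogc t).inner (hvtx t).continuous)).sub
      ((hρx t).continuous.mul ((hgrc t).inner (hvx t).continuous)))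
  have hhint : ∀ t ∈ Set.Icc (0 : ℝ) 1, Integrable (h t) := by
    intro t ht
    refine ((hFint t ht).const_mul (1 / 2)).mono' (hhcont t).aestronglyMeasurable ?_
    exact Filter.Eventually.of_forall fun x => by
      rw [Real.norm_eq_abs]; exact hbound t x
  -- the derivative of D
  have hD' : ∀ t ∈ Set.Icc (0 : ℝ) 1, HasDerivAt D (∫ x, h t x) t := by
    intro t ht
    have key : ∀ x, deriv (fun s => ρt s x) t * (1 + Real.log (ρt t x / ρ t x))
        - deriv (fun s => ρ s x) t * (ρt t x / ρ t x)
        = -(vdiv (fun y => (1 + Real.log (ρt t y / ρ t y)) • (ρt t y • vt t y)) x)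
          + vdiv (fun y => (ρt t y / ρ t y) • (ρ t y • v t y)) x + h t x := by
      intro x
      have e1 : deriv (fun s => ρt s x) t = -(vdiv (fun y => ρt t y • vt t y) x) := by
        have := hcet t ht x; linarith
      have e2 : deriv (fun s => ρ s x) t = -(vdiv (fun y => ρ t y • v t y) x) := by
        have := hce t ht x; linarith
      have d1 : DifferentiableAt ℝ (fun y => (1 : ℝ) + Real.log (ρt t y / ρ t y)) x :=
        (differentiableAt_const (1 : ℝ)).add ((hLx t).differentiable (by simp) x)
      have d2 : DifferentiableAt ℝ (fun y => ρt t y • vt t y) x :=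
        ((hρtx t).differentiable (by simp) x).smul ((hvtx t).differentiable (by simp) x)
      have d3 : DifferentiableAt ℝ (fun y => ρt t y / ρ t y) x :=
        (hrx t).differentiable (by simp) x
      have d4 : DifferentiableAt ℝ (fun y => ρ t y • v t y) x :=
        ((hρx t).differentiable (by simp) x).smul ((hvx t).differentiable (by simp) x)
      rw [e1, e2,
        vdiv_smul (f := fun y => (1 : ℝ) + Real.log (ρt t y / ρ t y))
          (w := fun y => ρt t y • vt t y) d1 d2,
        vdiv_smul (f := fun y => ρt t y / ρ t y) (w := fun y => ρ t y • v t y) d3 d4,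
        gradient_const_add (fun y => Real.log (ρt t y / ρ t y)) x,
        real_inner_smul_right, real_inner_smul_right]
      simp only [hhdef]
      ring
    have hA := hbdry₁ t ht
    have hB := hbdry₂ t ht
    have hsplit : (∫ x, (deriv (fun s => ρt s x) t * (1 + Real.log (ρt t x / ρ t x))
        - deriv (fun s => ρ s x) t * (ρt t x / ρ t x))) = ∫ x, h t x := by
      have hAneg : Integrable (fun x =>
          -(vdiv (fun y => (1 + Real.log (ρt t y / ρ t y)) • (ρt t y • vt t y)) x)) volume :=
        hA.1.neg
      have hAB : Integrable (fun x =>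
          -(vdiv (fun y => (1 + Real.log (ρt t y / ρ t y)) • (ρt t y • vt t y)) x)
            + vdiv (fun y => (ρt t y / ρ t y) • (ρ t y • v t y)) x) volume :=
        hAneg.add hB.1
      rw [integral_congr_ae (Filter.Eventually.of_forall key),
        integral_add hAB (hhint t ht),
        integral_add hAneg hB.1, MeasureTheory.integral_neg, hA.2, hB.2]
      ring
    have := hDUI t ht
    rwa [hsplit] at this
  have hψeq : ∀ t ∈ Set.Icc (0 : ℝ) 1, deriv D t = ∫ x, h t x :=
    fun t ht => (hD' t ht).deriv
  have habs2 : ∀ t ∈ Set.Icc (0 : ℝ) 1, |∫ x, h t x| ≤ (1 / 2) * ∫ x, Fi t x := by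
    intro t ht
    calc |∫ x, h t x| ≤ ∫ x, |h t x| := by
          simpa [Real.norm_eq_abs] using norm_integral_le_integral_norm (μ := volume) (h t)
      _ ≤ ∫ x, (1 / 2) * Fi t x :=
          integral_mono (hhint t ht).abs ((hFint t ht).const_mul (1 / 2)) fun x => hbound t x
      _ = (1 / 2) * ∫ x, Fi t x := integral_const_mul _ _
  have hg2 : IntervalIntegrable (fun t => (1 / 2) * ∫ x, Fi t x) volume 0 1 := by
    have := hfin₂.const_mul (1 / 2 : ℝ)
    simpa [hFidef] using this
  have hψint : IntervalIntegrable (deriv D) volume 0 1 := by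
    apply hg2.mono_fun (stronglyMeasurable_deriv D).aestronglyMeasurable
    filter_upwards [ae_restrict_mem measurableSet_uIoc] with t ht
    have ht' : t ∈ Set.Icc (0 : ℝ) 1 := by
      rw [Set.uIoc_of_le (by norm_num : (0 : ℝ) ≤ 1)] at ht
      exact Set.Ioc_subset_Icc_self ht
    rw [Real.norm_eq_abs, Real.norm_eq_abs, hψeq t ht']
    exact le_trans (habs2 t ht') (le_abs_self _)
  have hderiv' : ∀ t ∈ Set.uIcc (0 : ℝ) 1, HasDerivAt D (deriv D t) t := by
    intro t ht
    rw [Set.uIcc_of_le (by norm_num : (0 : ℝ) ≤ 1)] at ht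
    rw [hψeq t ht]; exact hD' t ht
  have hFTC : ∫ t in (0 : ℝ)..1, deriv D t = D 1 - D 0 :=
    integral_eq_sub_of_hasDerivAt hderiv' hψint
  have hlowint : IntervalIntegrable (fun t => -(1 / 2) * ∫ x, Fi t x) volume 0 1 := by
    have := hfin₂.const_mul (-(1 / 2) : ℝ)
    simpa [hFidef] using this
  have hlow : ∫ t in (0 : ℝ)..1, (-(1 / 2) * ∫ x, Fi t x) ≤ ∫ t in (0 : ℝ)..1, deriv D t := by
    refine integral_mono_on (by norm_num) hlowint hψint fun t ht => ?_
    rw [hψeq t ht]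
    have := habs2 t ht
    rw [abs_le] at this
    linarith [this.1]
  have hhalf : ∫ t in (0 : ℝ)..1, (-(1 / 2) * ∫ x, Fi t x)
      = -(1 / 2) * ∫ t in (0 : ℝ)..1, ∫ x, Fi t x := intervalIntegral.integral_const_mul _ _
  have hD1 : D 1 = ∫ x, ρt 1 x * Real.log (ρt 1 x / ρ 1 x) := rfl
  have hD0eq : D 0 = ∫ x, ρt₀ x * Real.log (ρt₀ x / ρ₀ x) := by
    simp only [hDdef]
    rw [hinit₁, hinit₂]
  constructor
  · -- inequality
    have : D 1 - D 0 ≥ -(1 / 2) * ∫ t in (0 : ℝ)..1, ∫ x, Fi t x := by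
      rw [← hFTC, ← hhalf]; exact hlow
    rw [hD1, hD0eq] at this
    simp only [hFidef] at this ⊢
    linarith
  · intro hgf
    have heqp : ∀ t ∈ Set.Icc (0 : ℝ) 1, deriv D t = -(1 / 2) * ∫ x, Fi t x := by
      intro t ht
      rw [hψeq t ht]
      have : ∫ x, h t x = ∫ x, -(1 / 2) * Fi t x := by
        refine integral_congr_ae (Filter.Eventually.of_forall fun x => ?_)
        obtain ⟨e1, e2⟩ := hgf t ht x
        simp only [hhdef, hFidef]
        rw [e1, e2, inner_neg_right, real_inner_self_eq_norm_sq,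
          real_inner_self_eq_norm_sq, norm_neg]
        ring
      rw [this, MeasureTheory.integral_const_mul]
    have hcg : ∫ t in (0 : ℝ)..1, deriv D t
        = ∫ t in (0 : ℝ)..1, (-(1 / 2) * ∫ x, Fi t x) := by
      refine intervalIntegral.integral_congr fun t ht => ?_
      rw [Set.uIcc_of_le (by norm_num : (0 : ℝ) ≤ 1)] at ht
      exact heqp t ht
    have : D 1 - D 0 = -(1 / 2) * ∫ t in (0 : ℝ)..1, ∫ x, Fi t x := by
      rw [← hFTC, hcg, hhalf]
    rw [hD1, hD0eq] at this
    simp only [hFidef] at this ⊢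
    linarith
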